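/- Let α > 0, set β = (√(1+α²)−1)/(√(1+α²)+1), let ρ > 0, and let σ(B) = {(2k+1+iα)/(β^nρ) : k ∈ ℤ, n ≥ 0}. Then for every ε with 1/√(1+2α²) < ε < 1, every point z of the half-plane Π_{α,ρ} = { z : Im z ≥ α√(1+α²)/(ρ(√(1+α²)+1)) } satisfies |(z−λ)/(z−conj λ)| < ε for some λ ∈ σ(B); i.e., Π_{α,ρ} ⊆ ∪_{λ∈σ(B)} {z : |b_λ(z)| < ε}. -/

import Mathlib

/-!
Multiplying by `d > 0` turns `(z - μ/d)/(z - conj (μ/d))` into `(dz - μ)/(dz - conj μ)`, so it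
suffices to cover one box around `μ = c + iα`. With `s = √(1+α²)` and `β = (s-1)/(s+1)`, the
interval `[αs/(s+1), αs/(s-1)]` has ratio `1/β`, so some `β^n ρ` moves `Im z` into it, and
some odd `c = 2k+1` is within `1` of the real part. On that box
`|b_μ(ζ)|² = 1 - 4α Im ζ / |ζ - conj μ|² ≤ 1/(1+2α²) < ε²`.
-/

open Complex ComplexConjugate

theorem Complex.normSq_sub_conj (z w : ℂ) :
    normSq (z - conj w) = normSq (z - w) + 4 * z.im * w.im := by
  simp only [normSq_apply, sub_re, sub_im, conj_re, conj_im]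
  ring

theorem Complex.norm_div_sub_conj_lt {z w : ℂ} {ε : ℝ} (hε : 0 ≤ ε)
    (h : (1 - ε ^ 2) * normSq (z - conj w) < 4 * z.im * w.im) :
    ‖(z - w) / (z - conj w)‖ < ε := by
  have hden : 0 < normSq (z - conj w) := by
    refine (normSq_nonneg _).lt_of_ne fun h0 => ?_
    have him : z.im + w.im = 0 := by simpa using congrArg im (normSq_eq_zero.mp h0.symm)
    rw [← h0, eq_neg_of_add_eq_zero_left him] at h
    nlinarith [sq_nonneg w.im]
  rw [← sq_lt_sq₀ (norm_nonneg _) hε, norm_div, div_pow, ← normSq_eq_norm_sq,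
    ← normSq_eq_norm_sq, div_lt_iff₀ hden]
  rw [normSq_sub_conj] at h ⊢
  nlinarith

theorem Complex.sub_div_ofReal_div_sub_conj (z w : ℂ) {d : ℝ} (hd : d ≠ 0) :
    (z - w / d) / (z - conj (w / d)) = (d * z - w) / (d * z - conj w) := by
  have hd' : (d : ℂ) ≠ 0 := ofReal_ne_zero.mpr hd
  rw [map_div₀, conj_ofReal, sub_div' hd', sub_div' hd', div_div_div_cancel_right₀ hd']
  ring_nf

theorem one_sub_sq_mul_lt_of_quadratic_nonpos {α ε x w : ℝ} (hα : 0 < α)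
    (hε : 1 < ε ^ 2 * (1 + 2 * α ^ 2)) (hx : x ^ 2 ≤ 1)
    (hw : α * w ^ 2 + α * (1 + α ^ 2) ≤ 2 * (1 + α ^ 2) * w) :
    (1 - ε ^ 2) * (x ^ 2 + (w + α) ^ 2) < 4 * w * α := by
  have hQ : 0 < x ^ 2 + (w + α) ^ 2 := by
    have : 0 < w := by nlinarith
    positivity
  have hbound : 2 * α ^ 2 * (x ^ 2 + (w + α) ^ 2) ≤ 4 * w * α * (1 + 2 * α ^ 2) := by
    linear_combination 2 * α * hw + 2 * α ^ 2 * hx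
  refine lt_of_mul_lt_mul_right ?_ (by positivity : (0 : ℝ) ≤ 1 + 2 * α ^ 2)
  calc (1 - ε ^ 2) * (x ^ 2 + (w + α) ^ 2) * (1 + 2 * α ^ 2)
      = (1 - ε ^ 2) * (1 + 2 * α ^ 2) * (x ^ 2 + (w + α) ^ 2) := by ring
    _ < 2 * α ^ 2 * (x ^ 2 + (w + α) ^ 2) := mul_lt_mul_of_pos_right (by linarith) hQ
    _ ≤ 4 * w * α * (1 + 2 * α ^ 2) := hbound

theorem quadratic_nonpos_of_mem_Icc {α s w : ℝ} (hα : 0 < α) (hs0 : 0 < s)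
    (hs : s ^ 2 = 1 + α ^ 2) (h₁ : α * s / (s + 1) ≤ w)
    (h₂ : (s - 1) / (s + 1) * w ≤ α * s / (s + 1)) :
    α * w ^ 2 + α * (1 + α ^ 2) ≤ 2 * (1 + α ^ 2) * w := by
  have hs1 : 0 < s + 1 := by linarith
  rw [div_le_iff₀ hs1] at h₁
  rw [div_mul_eq_mul_div, div_le_div_iff_of_pos_right hs1] at h₂
  -- `α s / (s + 1)` and `α s / (s - 1)` are the two roots of this quadratic
  have hprod := mul_nonneg (sub_nonneg.2 h₁) (sub_nonneg.2 h₂)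
  refine le_of_mul_le_mul_left ?_ hα
  linear_combination hprod - (w - α) ^ 2 * hs

theorem exists_pow_mul_near_of_lt_one {a t β : ℝ} (ha : 0 < a) (hat : a ≤ t) (hβ0 : 0 < β)
    (hβ1 : β < 1) : ∃ n : ℕ, a ≤ β ^ n * t ∧ β * (β ^ n * t) < a := by
  have ht : 0 < t := ha.trans_le hat
  obtain ⟨n, hlt, hle⟩ :=
    exists_nat_pow_near_of_lt_one (div_pos ha ht) ((div_le_one ht).2 hat) hβ0 hβ1
  refine ⟨n, (div_le_iff₀ ht).1 hle, ?_⟩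
  rw [← mul_assoc, ← pow_succ']
  exact (lt_div_iff₀ ht).1 hlt

theorem exists_int_abs_sub_two_mul_add_one_le (x : ℝ) : ∃ k : ℤ, |x - (2 * k + 1)| ≤ 1 := by
  refine ⟨⌊x / 2⌋, abs_le.2 ⟨?_, ?_⟩⟩
  · linarith [Int.floor_le (x / 2)]
  · linarith [Int.lt_floor_add_one (x / 2)]

theorem one_lt_sq_mul_of_one_div_sqrt_lt {q ε : ℝ} (hq : 0 < q) (h : 1 / Real.sqrt q < ε) :
    1 < ε ^ 2 * q := by
  rw [div_lt_iff₀ (Real.sqrt_pos.2 hq)] at h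
  nlinarith [Real.sq_sqrt hq.le]

theorem norm_div_sub_conj_lt_of_mem_box {α s ε c : ℝ} {ζ : ℂ} (hα : 0 < α) (hs0 : 0 < s)
    (hs : s ^ 2 = 1 + α ^ 2) (hε0 : 0 ≤ ε) (hε : 1 < ε ^ 2 * (1 + 2 * α ^ 2))
    (hre : |ζ.re - c| ≤ 1) (him₁ : α * s / (s + 1) ≤ ζ.im)
    (him₂ : (s - 1) / (s + 1) * ζ.im ≤ α * s / (s + 1)) :
    ‖(ζ - (c + α * I)) / (ζ - conj (c + α * I))‖ < ε := by
  refine norm_div_sub_conj_lt hε0 ?_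
  have hx : (ζ.re - c) ^ 2 ≤ 1 := (sq_le_one_iff_abs_le_one _).2 hre
  convert one_sub_sq_mul_lt_of_quadratic_nonpos hα hε hx
    (quadratic_nonpos_of_mem_Icc hα hs0 hs him₁ him₂) using 2
  · simp only [normSq_apply, sub_re, sub_im, conj_re, conj_im, add_re, add_im, mul_re, mul_im,
      ofReal_re, ofReal_im, I_re, I_im]
    ring
  · simp

theorem halfplane_covered_by_pseudohyperbolic_disks
    (α ρ : ℝ) (hα : 0 < α) (hρ : 0 < ρ) (ε : ℝ)
    (hε : 1 / Real.sqrt (1 + 2 * α ^ 2) < ε) (z : ℂ)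
    (hz : α * Real.sqrt (1 + α ^ 2) / (ρ * (Real.sqrt (1 + α ^ 2) + 1)) ≤ z.im) :
    ∃ k : ℤ, ∃ n : ℕ,
      ‖(z - ((2 * (k : ℂ) + 1) + (α : ℂ) * Complex.I) /
            ((((Real.sqrt (1 + α ^ 2) - 1) / (Real.sqrt (1 + α ^ 2) + 1)) ^ n * ρ : ℝ) : ℂ)) /
         (z - (starRingEnd ℂ) (((2 * (k : ℂ) + 1) + (α : ℂ) * Complex.I) /
            ((((Real.sqrt (1 + α ^ 2) - 1) / (Real.sqrt (1 + α ^ 2) + 1)) ^ n * ρ : ℝ) : ℂ)))‖ < ε := by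
  set s := Real.sqrt (1 + α ^ 2)
  have hs : s ^ 2 = 1 + α ^ 2 := Real.sq_sqrt (by positivity)
  have hs1 : 1 < s := by nlinarith [Real.sqrt_nonneg (1 + α ^ 2)]
  have hε0 : 0 ≤ ε := (by positivity : 0 ≤ 1 / Real.sqrt (1 + 2 * α ^ 2)).trans hε.le
  have hε' := one_lt_sq_mul_of_one_div_sqrt_lt (by positivity) hε
  have hβ0 : 0 < (s - 1) / (s + 1) := div_pos (by linarith) (by linarith)
  have hβ1 : (s - 1) / (s + 1) < 1 := (div_lt_one (by linarith)).2 (by linarith)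
  have ht : α * s / (s + 1) ≤ ρ * z.im := by
    rw [mul_comm ρ, ← div_div, div_le_iff₀ hρ] at hz
    linarith
  obtain ⟨n, hn₁, hn₂⟩ := exists_pow_mul_near_of_lt_one (by positivity) ht hβ0 hβ1
  obtain ⟨k, hk⟩ := exists_int_abs_sub_two_mul_add_one_le (((s - 1) / (s + 1)) ^ n * ρ * z.re)
  refine ⟨k, n, ?_⟩
  rw [sub_div_ofReal_div_sub_conj _ _ (by positivity),
    show 2 * (k : ℂ) + 1 = (2 * k + 1 : ℝ) by push_cast; ring]
  refine norm_div_sub_conj_lt_of_mem_box hα (by linarith) hs hε0 hε' ?_ ?_ ?_ <;>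
    simp only [re_ofReal_mul, im_ofReal_mul] <;> linarith
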